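/- Decay estimate: under the hypotheses of the radial comparison principle, |u_1(ρ) - u_2(ρ)| ≤ C · (sup over ρ = ρ* of |u_1 - u_2|) · e^{-3ρ} for all ρ ≥ ρ*, where C depends only on ρ*. -/

import Mathlib

/-!
The difference `η = u₁ - u₂` satisfies `η'' + 2 coth ρ η' ≥ 3η` wherever `η > 0`, because
`u ↦ (3/4)(u⁵ - u)` has slope at least `3` on `[1, ∞)`. Since `ξ'' + 2 coth ρ ξ' = 3ξ`, the function
`w = A ξ - η` satisfies `w'' + 2 coth ρ w' ≤ 3w` where `w < 0`, so `w` has no negative interior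
minimum; as `w(ρ*) ≥ 0` and `w → 0` at infinity, `w ≥ 0`. Applying this to `±η` gives `|η| ≤ A ξ`,
and `ξ(ρ) ≤ 2 e^{-3ρ} / (1 - e^{-2ρ*})` for `ρ ≥ ρ*`.
-/

open Real Set Filter Topology

noncomputable def decayProfile (ρ : ℝ) : ℝ := exp (-2 * ρ) / sinh ρ

noncomputable def decayProfileDeriv (ρ : ℝ) : ℝ :=
  -exp (-2 * ρ) * (2 * sinh ρ + cosh ρ) / sinh ρ ^ 2

lemma decayProfile_pos {ρ : ℝ} (hρ : 0 < ρ) : 0 < decayProfile ρ :=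
  div_pos (exp_pos _) (sinh_pos_iff.2 hρ)

lemma hasDerivAt_exp_neg_two_mul (ρ : ℝ) :
    HasDerivAt (fun x => exp (-2 * x)) (-2 * exp (-2 * ρ)) ρ := by
  convert ((hasDerivAt_id' ρ).const_mul (-2)).exp using 1
  ring

lemma hasDerivAt_decayProfile {ρ : ℝ} (hρ : 0 < ρ) :
    HasDerivAt decayProfile (decayProfileDeriv ρ) ρ := by
  refine ((hasDerivAt_exp_neg_two_mul ρ).div (hasDerivAt_sinh ρ)
    (sinh_pos_iff.2 hρ).ne').congr_deriv ?_
  simp only [decayProfileDeriv]; ring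

lemma hasDerivAt_decayProfileDeriv {ρ : ℝ} (hρ : 0 < ρ) :
    HasDerivAt decayProfileDeriv
      (3 * decayProfile ρ - 2 * (cosh ρ / sinh ρ) * decayProfileDeriv ρ) ρ := by
  have hs : sinh ρ ≠ 0 := (sinh_pos_iff.2 hρ).ne'
  have hnum : HasDerivAt (fun x => -exp (-2 * x) * (2 * sinh x + cosh x))
      (3 * exp (-2 * ρ) * sinh ρ) ρ :=
    ((hasDerivAt_exp_neg_two_mul ρ).neg.mul
      (((hasDerivAt_sinh ρ).const_mul 2).add (hasDerivAt_cosh ρ))).congr_deriv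
      (by simp only [Pi.add_apply, Pi.neg_apply]; ring)
  refine (hnum.div ((hasDerivAt_sinh ρ).pow 2) (pow_ne_zero 2 hs)).congr_deriv ?_
  simp only [decayProfile, decayProfileDeriv, Pi.pow_apply]
  field_simp
  ring

lemma decayProfile_le_of_le {a ρ : ℝ} (ha : 0 < a) (hρ : a ≤ ρ) :
    decayProfile ρ ≤ 2 / (1 - exp (-2 * a)) * exp (-3 * ρ) := by
  have hc : 0 < 1 - exp (-2 * a) := sub_pos.2 (exp_lt_one_iff.2 (by linarith))
  have hsinh : exp ρ * (1 - exp (-2 * a)) / 2 ≤ sinh ρ := by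
    have h : exp (-ρ) ≤ exp (-2 * a) * exp ρ := by
      rw [← exp_add]; exact exp_le_exp.2 (by linarith)
    rw [sinh_eq]; linarith
  calc decayProfile ρ ≤ exp (-2 * ρ) / (exp ρ * (1 - exp (-2 * a)) / 2) := by
        simp only [decayProfile]; gcongr
    _ = 2 / (1 - exp (-2 * a)) * exp (-3 * ρ) := by
        rw [show -2 * ρ = ρ + -3 * ρ by ring, exp_add]
        field_simp

lemma tendsto_decayProfile_atTop : Tendsto decayProfile atTop (𝓝 0) := by
  have hexp : Tendsto (fun ρ : ℝ => 2 / (1 - exp (-2 * 1)) * exp (-3 * ρ)) atTop (𝓝 0) := by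
    simpa using (tendsto_exp_atBot.comp
      (tendsto_id.const_mul_atTop_of_neg (by norm_num : (-3 : ℝ) < 0))).const_mul _
  refine tendsto_of_tendsto_of_tendsto_of_le_of_le' tendsto_const_nhds hexp ?_ ?_
  · filter_upwards [eventually_gt_atTop 0] with ρ hρ using (decayProfile_pos hρ).le
  · filter_upwards [eventually_ge_atTop 1] with ρ hρ using decayProfile_le_of_le one_pos hρ

theorem IsLocalMin.deriv_deriv_nonneg {f : ℝ → ℝ} {x : ℝ} (hmin : IsLocalMin f x)
    (hc : ContinuousAt f x) : 0 ≤ deriv (deriv f) x := by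
  by_contra! hneg
  have hmax := isLocalMax_of_deriv_deriv_neg hneg hmin.deriv_eq_zero hc
  have hconst : f =ᶠ[𝓝 x] fun _ => f x :=
    (hmin.and hmax).mono fun y hy => le_antisymm hy.2 hy.1
  have hderiv : deriv f =ᶠ[𝓝 x] fun _ => 0 :=
    hconst.eventuallyEq_nhds.mono fun y hy => by rw [hy.deriv_eq, deriv_const]
  rw [hderiv.deriv_eq, deriv_const] at hneg
  exact lt_irrefl 0 hneg

theorem minimum_principle_Ici {a : ℝ} {w w' w'' : ℝ → ℝ} (hcont : ContinuousOn w (Ici a))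
    (hw : ∀ x, a < x → HasDerivAt w (w' x) x) (hw' : ∀ x, a < x → HasDerivAt w' (w'' x) x)
    (hneg : ∀ x, a < x → w x < 0 → w' x = 0 → w'' x < 0)
    (ha : 0 ≤ w a) (hlim : Tendsto w atTop (𝓝 0)) : ∀ x, a ≤ x → 0 ≤ w x := by
  by_contra! ⟨x₁, hx₁, hwx₁⟩
  obtain ⟨x₀, hx₀, hmin⟩ := hcont.exists_isMinOn' isClosed_Ici hx₁ (by
    rw [cocompact_eq_atBot_atTop, inf_sup_right, (disjoint_atBot_principal_Ici a).eq_bot,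
      bot_sup_eq]
    exact ((hlim.eventually (lt_mem_nhds hwx₁)).mono fun _ => le_of_lt).filter_mono inf_le_left)
  have hwx₀ : w x₀ < 0 := (hmin hx₁).trans_lt hwx₁
  have hax₀ : a < x₀ := lt_of_le_of_ne hx₀ (by rintro rfl; linarith)
  have hloc : IsLocalMin w x₀ := hmin.isLocalMin (Ici_mem_nhds hax₀)
  have hderiv : deriv w =ᶠ[𝓝 x₀] w' :=
    eventually_of_mem (Ioi_mem_nhds hax₀) fun x hx => (hw x hx).deriv
  have h' : w' x₀ = 0 := hderiv.self_of_nhds ▸ hloc.deriv_eq_zero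
  have h'' : deriv (deriv w) x₀ = w'' x₀ := ((hw' x₀ hax₀).congr_of_eventuallyEq hderiv).deriv
  exact (hneg x₀ hax₀ hwx₀ h').not_ge (h'' ▸ hloc.deriv_deriv_nonneg (hw x₀ hax₀).continuousAt)

theorem le_mul_decayProfile {a A : ℝ} {η η' η'' : ℝ → ℝ} (ha : 0 < a) (hA : 0 ≤ A)
    (hcont : ContinuousOn η (Ici a))
    (hη : ∀ x, a < x → HasDerivAt η (η' x) x) (hη' : ∀ x, a < x → HasDerivAt η' (η'' x) x)
    (hsub : ∀ x, a < x → 0 < η x → 3 * η x ≤ η'' x + 2 * (cosh x / sinh x) * η' x)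
    (h₀ : η a ≤ A * decayProfile a) (hlim : Tendsto η atTop (𝓝 0)) :
    ∀ x, a ≤ x → η x ≤ A * decayProfile x := by
  have hpos_of_le : ∀ x, a ≤ x → 0 < x := fun x hx => ha.trans_le hx
  have hw := minimum_principle_Ici (w := fun x => A * decayProfile x - η x)
    (w' := fun x => A * decayProfileDeriv x - η' x)
    (w'' := fun x => A * (3 * decayProfile x - 2 * (cosh x / sinh x) * decayProfileDeriv x) - η'' x)
    ((continuousOn_const.mul fun x hx =>
      (hasDerivAt_decayProfile (hpos_of_le x hx)).continuousAt.continuousWithinAt).sub hcont)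
    (fun x hx => ((hasDerivAt_decayProfile (hpos_of_le x hx.le)).const_mul A).sub (hη x hx))
    (fun x hx => ((hasDerivAt_decayProfileDeriv (hpos_of_le x hx.le)).const_mul A).sub (hη' x hx))
    ?_ (sub_nonneg.2 h₀) (by simpa using (tendsto_decayProfile_atTop.const_mul A).sub hlim)
  · exact fun x hx => sub_nonneg.1 (hw x hx)
  intro x hx hwx hw'x
  have hpos : 0 < η x := by
    have := mul_nonneg hA (decayProfile_pos (hpos_of_le x hx.le)).le
    linarith
  have hη'x : A * decayProfileDeriv x = η' x := sub_eq_zero.1 hw'x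
  calc A * (3 * decayProfile x - 2 * (cosh x / sinh x) * decayProfileDeriv x) - η'' x
      = 3 * (A * decayProfile x) - (η'' x + 2 * (cosh x / sinh x) * η' x) := by
        rw [← hη'x]; ring
    _ ≤ 3 * (A * decayProfile x) - 3 * η x := by linarith [hsub x hx hpos]
    _ < 0 := by linarith

lemma five_mul_sub_le_pow_five_sub_pow_five {a b : ℝ} (hb : 1 ≤ b) (hab : b ≤ a) :
    5 * (a - b) ≤ a ^ 5 - b ^ 5 := by
  have ha : 1 ≤ a := hb.trans hab
  have hsum : 5 ≤ a ^ 4 + a ^ 3 * b + a ^ 2 * b ^ 2 + a * b ^ 3 + b ^ 4 := by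
    have h₁ := one_le_mul_of_one_le_of_one_le (one_le_pow₀ (n := 3) ha) hb
    have h₂ := one_le_mul_of_one_le_of_one_le (one_le_pow₀ (n := 2) ha) (one_le_pow₀ (n := 2) hb)
    have h₃ := one_le_mul_of_one_le_of_one_le ha (one_le_pow₀ (n := 3) hb)
    linarith [one_le_pow₀ (n := 4) ha, one_le_pow₀ (n := 4) hb]
  calc 5 * (a - b) ≤ (a - b) * (a ^ 4 + a ^ 3 * b + a ^ 2 * b ^ 2 + a * b ^ 3 + b ^ 4) := by
        nlinarith [sub_nonneg.2 hab]
    _ = a ^ 5 - b ^ 5 := by ring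

theorem ContDiffOn.hasDerivAt_deriv_deriv {s : Set ℝ} {u : ℝ → ℝ} {x : ℝ}
    (hu : ContDiffOn ℝ 2 u s) (hx : s ∈ 𝓝 x) : HasDerivAt (deriv u) (deriv (deriv u) x) x := by
  have hu' : ContDiffOn ℝ 1 (deriv u) (interior s) :=
    (hu.mono interior_subset).deriv_of_isOpen isOpen_interior (by norm_num)
  exact ((hu'.differentiableOn one_ne_zero).differentiableAt
    (isOpen_interior.mem_nhds (mem_interior_iff_mem_nhds.2 hx))).hasDerivAt

theorem sub_le_mul_decayProfile {a A : ℝ} {u₁ u₂ f : ℝ → ℝ} (ha : 0 < a) (hA : 0 ≤ A)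
    (hu₁ : ContDiffOn ℝ 2 u₁ (Ici a)) (hu₂ : ContDiffOn ℝ 2 u₂ (Ici a))
    (hu₂_ge : ∀ x, a < x → 1 ≤ u₂ x)
    (hode₁ : ∀ x, a < x → deriv (deriv u₁) x + 2 * (cosh x / sinh x) * deriv u₁ x +
      (3 / 4) * u₁ x * (1 - u₁ x ^ 4) = f x)
    (hode₂ : ∀ x, a < x → deriv (deriv u₂) x + 2 * (cosh x / sinh x) * deriv u₂ x +
      (3 / 4) * u₂ x * (1 - u₂ x ^ 4) = f x)
    (h₀ : u₁ a - u₂ a ≤ A * decayProfile a) (hlim : Tendsto (fun x => u₁ x - u₂ x) atTop (𝓝 0)) :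
    ∀ x, a ≤ x → u₁ x - u₂ x ≤ A * decayProfile x := by
  have hd : ∀ {u : ℝ → ℝ}, ContDiffOn ℝ 2 u (Ici a) → ∀ x, a < x → HasDerivAt u (deriv u x) x :=
    fun hu x hx => ((hu.differentiableOn two_ne_zero).differentiableAt (Ici_mem_nhds hx)).hasDerivAt
  have hdd : ∀ {u : ℝ → ℝ}, ContDiffOn ℝ 2 u (Ici a) →
      ∀ x, a < x → HasDerivAt (deriv u) (deriv (deriv u) x) x :=
    fun hu x hx => hu.hasDerivAt_deriv_deriv (Ici_mem_nhds hx)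
  refine le_mul_decayProfile (η := fun x => u₁ x - u₂ x) ha hA
    (hu₁.continuousOn.sub hu₂.continuousOn)
    (fun x hx => (hd hu₁ x hx).sub (hd hu₂ x hx)) (fun x hx => (hdd hu₁ x hx).sub (hdd hu₂ x hx))
    (fun x hx hpos => ?_) h₀ hlim
  have hL : deriv (deriv u₁) x - deriv (deriv u₂) x +
      2 * (cosh x / sinh x) * (deriv u₁ x - deriv u₂ x) =
      (3 / 4) * ((u₁ x ^ 5 - u₂ x ^ 5) - (u₁ x - u₂ x)) := by
    linear_combination hode₁ x hx - hode₂ x hx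
  rw [hL]
  linarith [five_mul_sub_le_pow_five_sub_pow_five (hu₂_ge x hx) (sub_pos.1 hpos).le]

/-- Decay estimate: under the hypotheses of the radial comparison principle,
`|u₁(ρ) - u₂(ρ)| ≤ C |u₁(ρ*) - u₂(ρ*)| e^{-3ρ}` for all `ρ ≥ ρ*`, where `C` depends
only on `ρ*`. -/
theorem radial_decay_estimate (ρs : ℝ) (hρs : 0 < ρs) :
    ∃ C : ℝ, 0 < C ∧ ∀ u₁ u₂ f : ℝ → ℝ,
      ContDiffOn ℝ 2 u₁ (Set.Ici ρs) → ContDiffOn ℝ 2 u₂ (Set.Ici ρs) →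
      (∀ ρ, ρs ≤ ρ → 1 ≤ u₁ ρ) → (∀ ρ, ρs ≤ ρ → 1 ≤ u₂ ρ) →
      (∀ ρ, ρs < ρ →
        deriv (deriv u₁) ρ + 2 * (Real.cosh ρ / Real.sinh ρ) * deriv u₁ ρ +
          (3 / 4) * u₁ ρ * (1 - (u₁ ρ) ^ 4) = f ρ) →
      (∀ ρ, ρs < ρ →
        deriv (deriv u₂) ρ + 2 * (Real.cosh ρ / Real.sinh ρ) * deriv u₂ ρ +
          (3 / 4) * u₂ ρ * (1 - (u₂ ρ) ^ 4) = f ρ) →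
      Filter.Tendsto (fun ρ => u₁ ρ - u₂ ρ) Filter.atTop (nhds 0) →
      ∀ ρ, ρs ≤ ρ → |u₁ ρ - u₂ ρ| ≤ C * |u₁ ρs - u₂ ρs| * Real.exp (-3 * ρ) := by
  have hξ : 0 < decayProfile ρs := decayProfile_pos hρs
  have hB : 0 < 2 / (1 - exp (-2 * ρs)) :=
    div_pos two_pos (sub_pos.2 (exp_lt_one_iff.2 (by linarith)))
  refine ⟨2 / (1 - exp (-2 * ρs)) / decayProfile ρs, div_pos hB hξ, ?_⟩
  intro u₁ u₂ f hu₁ hu₂ hu₁_ge hu₂_ge hode₁ hode₂ hlim ρ hρ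
  set A := |u₁ ρs - u₂ ρs| / decayProfile ρs
  have hA : 0 ≤ A := div_nonneg (abs_nonneg _) hξ.le
  have hAξ : A * decayProfile ρs = |u₁ ρs - u₂ ρs| := div_mul_cancel₀ _ hξ.ne'
  have hle := sub_le_mul_decayProfile hρs hA hu₁ hu₂ (fun x hx => hu₂_ge x hx.le) hode₁ hode₂
    (hAξ ▸ le_abs_self _) hlim ρ hρ
  have hge := sub_le_mul_decayProfile hρs hA hu₂ hu₁ (fun x hx => hu₁_ge x hx.le) hode₂ hode₁
    (hAξ ▸ abs_sub_comm (u₁ ρs) _ ▸ le_abs_self _) (by simpa using hlim.neg) ρ hρ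
  calc |u₁ ρ - u₂ ρ| ≤ A * decayProfile ρ := abs_sub_le_iff.2 ⟨hle, hge⟩
    _ ≤ A * (2 / (1 - exp (-2 * ρs)) * exp (-3 * ρ)) :=
        mul_le_mul_of_nonneg_left (decayProfile_le_of_le hρs hρ) hA
    _ = 2 / (1 - exp (-2 * ρs)) / decayProfile ρs * |u₁ ρs - u₂ ρs| * exp (-3 * ρ) := by
        simp only [A]; ring
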